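/- For every real number v with 1 ≤ v ≤ 2 there exists an irrational real number θ such that ω̂̂(θ) = v. In other words, the spectrum of values of the weak uniform Diophantine exponent over irrational θ is exactly the segment [1, 2]. -/

import Mathlib

open Filter

/-- The eventual approximation condition underlying `weakUniformExp`. -/
def SCond (θ γ : ℝ) : Prop :=
  ∀ᶠ t : ℝ in atTop, ∃ p q : ℤ, 1 ≤ q ∧ (q : ℝ) ≤ t ∧
    (q : ℝ) * |(q : ℝ) * θ - (p : ℝ)| ≤ t ^ (1 - γ)

/-- The weak uniform Diophantine exponent of a real number `θ`:
the supremum (in `EReal`) of real `γ` such that for every sufficiently large `t`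
there are integers `p`, `q` with `1 ≤ q ≤ t` and `q·|qθ − p| ≤ t^(1−γ)`. -/
noncomputable def weakUniformExp (θ : ℝ) : EReal :=
  sSup {g : EReal | ∃ γ : ℝ, g = (γ : EReal) ∧
    ∀ᶠ t : ℝ in atTop, ∃ p q : ℤ, 1 ≤ q ∧ (q : ℝ) ≤ t ∧
      (q : ℝ) * |(q : ℝ) * θ - (p : ℝ)| ≤ t ^ (1 - γ)}
lemma weakUniformExp_def (θ : ℝ) :
    weakUniformExp θ = sSup {g : EReal | ∃ γ : ℝ, g = (γ : EReal) ∧ SCond θ γ} := rfl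

lemma scond_of_le_one (θ : ℝ) {γ : ℝ} (h : γ ≤ 1) : SCond θ γ := by
  filter_upwards [eventually_ge_atTop (1 : ℝ)] with t ht
  refine ⟨⌊θ⌋, 1, le_refl 1, by exact_mod_cast ht.trans' (by norm_num), ?_⟩
  have h1 : |(1 : ℝ) * θ - (⌊θ⌋ : ℝ)| ≤ 1 := by
    rw [one_mul]
    rw [abs_le]
    constructor
    · nlinarith [Int.floor_le θ]
    · nlinarith [Int.lt_floor_add_one θ]
  have h2 : (1 : ℝ) ≤ t ^ (1 - γ) := by
    have := Real.rpow_le_rpow_of_exponent_le ht (by linarith : (0:ℝ) ≤ 1 - γ)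
    rwa [Real.rpow_zero] at this
  push_cast
  nlinarith
lemma exp_le_of (θ : ℝ) (v : ℝ) (h2 : ∀ γ : ℝ, SCond θ γ → γ ≤ v) :
    weakUniformExp θ ≤ (v : EReal) := by
  rw [weakUniformExp_def]
  refine sSup_le ?_
  rintro g ⟨γ, rfl, hγ⟩
  exact_mod_cast EReal.coe_le_coe_iff.mpr (h2 γ hγ)

lemma le_exp_of (θ : ℝ) (v : ℝ) (h1 : ∀ γ : ℝ, γ < v → SCond θ γ) :
    (v : EReal) ≤ weakUniformExp θ := by
  by_contra h
  push_neg at h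
  obtain ⟨y, hy1, hy2⟩ := EReal.exists_between_coe_real h
  rw [weakUniformExp_def] at hy1
  have hmem : ((y : ℝ) : EReal) ∈ {g : EReal | ∃ γ : ℝ, g = (γ : EReal) ∧ SCond θ γ} :=
    ⟨y, rfl, h1 y (by exact_mod_cast hy2)⟩
  exact absurd (le_sSup hmem) (not_le.2 hy1)

lemma exp_eq_of (θ : ℝ) (v : ℝ) (h1 : ∀ γ : ℝ, γ < v → SCond θ γ)
    (h2 : ∀ γ : ℝ, SCond θ γ → γ ≤ v) : weakUniformExp θ = (v : EReal) :=
  le_antisymm (exp_le_of θ v h2) (le_exp_of θ v h1)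

lemma one_le_exp (θ : ℝ) : ((1:ℝ) : EReal) ≤ weakUniformExp θ :=
  le_exp_of θ 1 (fun γ hγ => scond_of_le_one θ hγ.le)

/-- nearest integer minimizes distance -/
lemma scond_le_one_of_bad (θ : ℝ) (c : ℝ) (hc : 0 < c)
    (hbad : ∀ p q : ℤ, 1 ≤ q → c ≤ (q:ℝ) * |(q:ℝ) * θ - (p:ℝ)|)
    (γ : ℝ) (h : SCond θ γ) : γ ≤ 1 := by
  by_contra hγ
  push_neg at hγ
  have h0 : Tendsto (fun t : ℝ => t ^ (1 - γ)) atTop (nhds 0) := by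
    have := tendsto_rpow_neg_atTop (by linarith : 0 < γ - 1)
    simpa [show -(γ - 1) = 1 - γ by ring] using this
  have hev : ∀ᶠ t : ℝ in atTop, t ^ (1 - γ) < c := by
    have := h0.eventually (eventually_lt_nhds hc)
    simpa using this
  obtain ⟨t, hP, hlt⟩ := (h.and hev).exists
  obtain ⟨p, q, hq1, hqt, hle⟩ := hP
  exact absurd (le_trans (hbad p q hq1) hle) (not_le.2 hlt)

lemma round_min (x : ℝ) (p : ℤ) : |x - round x| ≤ |x - (p : ℝ)| := by
  rcases eq_or_ne p (round x) with rfl | hp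
  · exact le_refl _
  · have h1 : |x - round x| ≤ 1 / 2 := abs_sub_round x
    have h2 : (1 : ℝ) ≤ |(round x : ℝ) - p| := by
      have : round x - p ≠ 0 := sub_ne_zero.mpr (Ne.symm hp)
      have := Int.one_le_abs this
      exact_mod_cast this
    have := abs_sub_abs_le_abs_sub ((round x : ℝ) - p) (x - p)
    have h3 := abs_sub ((round x:ℝ) - p) (x - p)
    -- |round x - p| - |x - p| ≤ |(round x - p) - (x - p)| = |round x - x| = |x - round x|
    have h4 : |((round x : ℝ) - p) - (x - p)| = |x - round x| := by
      rw [show ((round x : ℝ) - p) - (x - p) = -(x - round x) by ring, abs_neg]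
    nlinarith [abs_sub_abs_le_abs_sub ((round x : ℝ) - p) (x - p), abs_nonneg (x - (p:ℝ))]

lemma sqrt2_bound (p q : ℤ) (hq : 1 ≤ q) :
    (1:ℝ)/5 ≤ (q:ℝ) * |(q:ℝ) * Real.sqrt 2 - (p:ℝ)| := by
  set s := Real.sqrt 2 with hs
  have hs2 : s ^ 2 = 2 := Real.sq_sqrt (by norm_num)
  have hs1 : 1 ≤ s := by nlinarith [Real.sqrt_nonneg 2]
  have hs15 : s ≤ 3/2 := by nlinarith [Real.sqrt_nonneg 2]
  have hqR : (1:ℝ) ≤ (q:ℝ) := by exact_mod_cast hq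
  have hne : 2 * q^2 - p^2 ≠ 0 := by
    intro h
    have hp2 : (p:ℝ)^2 = 2 * (q:ℝ)^2 := by
      have : (p:ℝ)^2 - 2*(q:ℝ)^2 = 0 := by exact_mod_cast (by linarith [h] : p^2 - 2*q^2 = 0)
      linarith
    have hsq : s = |(p:ℝ)/(q:ℝ)| := by
      rw [hs, show (2:ℝ) = ((p:ℝ)/(q:ℝ))^2 by field_simp; nlinarith, Real.sqrt_sq_eq_abs]
    have : Irrational s := irrational_sqrt_two
    rcases abs_cases ((p:ℝ)/(q:ℝ)) with ⟨h1, _⟩ | ⟨h1, _⟩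
    · exact (Rat.not_irrational ((p:ℚ)/(q:ℚ))) (by rwa [hsq, h1, show ((p:ℝ)/(q:ℝ)) = (((p:ℚ)/(q:ℚ) : ℚ) : ℝ) by push_cast; ring] at this)
    · exact (Rat.not_irrational (-((p:ℚ)/(q:ℚ)))) (by rwa [hsq, h1, show (-((p:ℝ)/(q:ℝ))) = ((-((p:ℚ)/(q:ℚ)) : ℚ) : ℝ) by push_cast; ring] at this)
  have habs : (1:ℝ) ≤ |2 * (q:ℝ)^2 - (p:ℝ)^2| := by
    have := Int.one_le_abs hne
    exact_mod_cast this
  have hmul : |(q:ℝ) * s - p| * |(q:ℝ) * s + p| = |2 * (q:ℝ)^2 - (p:ℝ)^2| := by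
    rw [← abs_mul]
    congr 1
    nlinarith [hs2]
  by_cases hp : |(p:ℝ)| ≤ 3 * q
  · -- |qs + p| ≤ (3/2) q + 3 q = 4.5 q
    have h1 : |(q:ℝ) * s + p| ≤ 5 * q := by
      calc |(q:ℝ) * s + p| ≤ |(q:ℝ) * s| + |(p:ℝ)| := abs_add_le _ _
        _ ≤ (3/2) * q + 3 * q := by
            rw [abs_of_nonneg (by nlinarith : (0:ℝ) ≤ (q:ℝ) * s)]
            nlinarith
        _ ≤ 5 * q := by nlinarith
    have h2 : (1:ℝ) ≤ |(q:ℝ) * s - p| * (5 * q) := by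
      calc (1:ℝ) ≤ |(q:ℝ) * s - p| * |(q:ℝ) * s + p| := by rw [hmul]; exact habs
        _ ≤ |(q:ℝ) * s - p| * (5 * q) := by
            apply mul_le_mul_of_nonneg_left h1 (abs_nonneg _)
    nlinarith [abs_nonneg ((q:ℝ)*s - p)]
  · push_neg at hp
    have h1 : (1:ℝ) ≤ |(q:ℝ) * s - p| := by
      have : (3:ℝ) * q - (3/2) * q ≤ |(p:ℝ)| - |(q:ℝ)*s| := by
        rw [abs_of_nonneg (by nlinarith : (0:ℝ) ≤ (q:ℝ) * s)]
        nlinarith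
      calc (1:ℝ) ≤ (3:ℝ) * q - (3/2) * q := by nlinarith
        _ ≤ |(p:ℝ)| - |(q:ℝ)*s| := this
        _ ≤ |(q:ℝ)*s - p| := by
            have := abs_sub_abs_le_abs_sub (p:ℝ) ((q:ℝ)*s)
            rw [abs_sub_comm] at this
            linarith
    nlinarith
lemma rpow_aux_bound (X γ : ℝ) (hX1 : 1 ≤ X) (hγ : 2 < γ)
    (h2γ : (2:ℝ)^γ < X^(γ-2)) : (X/2)^(1-γ) * (2*X) < 1 := by
  have pX : (0:ℝ) < X := by linarith
  rw [Real.div_rpow (by linarith) (by norm_num : (0:ℝ) ≤ 2)]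
  rw [div_mul_eq_mul_div, div_lt_one (by positivity)]
  have i1 : X^(2-γ) = X^(1-γ) * X := by
    rw [show (2-γ) = (1-γ)+1 by ring, Real.rpow_add_one (ne_of_gt pX)]
  have i2 : X^(2-γ) * X^(γ-2) = 1 := by
    rw [← Real.rpow_add pX]; norm_num
  have i3 : (2:ℝ)^(1-γ) * (2:ℝ)^γ = 2 := by
    rw [← Real.rpow_add (by norm_num : (0:ℝ) < 2)]; norm_num
  have p2 : (0:ℝ) < (2:ℝ)^(1-γ) := Real.rpow_pos_of_pos (by norm_num) _
  have pXg : (0:ℝ) < X^(γ-2) := Real.rpow_pos_of_pos pX _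
  have pX1γ : (0:ℝ) < X^(1-γ) := Real.rpow_pos_of_pos pX _
  nlinarith [mul_pos p2 (sub_pos.mpr h2γ), i1, i2, i3]

/-- For irrational θ, SCond θ γ implies γ ≤ 2. -/
lemma scond_le_two (θ : ℝ) (hirr : Irrational θ) (γ : ℝ) (h : SCond θ γ) : γ ≤ 2 := by
  by_contra hγ
  push_neg at hγ
  set f : ℤ → ℝ := fun q => |(q:ℝ) * θ - round ((q:ℝ) * θ)| with hf
  have fpos : ∀ q : ℤ, q ≠ 0 → 0 < f q := by
    intro q hq
    have : Irrational ((q:ℝ) * θ) := Irrational.intCast_mul hirr hq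
    have hne : (q:ℝ) * θ - (round ((q:ℝ)*θ) : ℝ) ≠ 0 := sub_ne_zero.mpr (this.ne_int _)
    exact abs_pos.mpr hne
  rw [SCond, eventually_atTop] at h
  obtain ⟨T₀, hT₀⟩ := h
  have hMex : ∀ᶠ x : ℝ in atTop, (2:ℝ)^γ < x ^ (γ - 2) :=
    (tendsto_rpow_atTop (by linarith : 0 < γ - 2)).eventually_gt_atTop _
  rw [eventually_atTop] at hMex
  obtain ⟨M₀, hM₀⟩ := hMex
  obtain ⟨M, hM⟩ := exists_nat_ge (max (max M₀ T₀) 1)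
  have hM1 : (1:ℝ) ≤ M := le_trans (le_max_right _ _) hM
  have hMM₀ : M₀ ≤ (M:ℝ) := le_trans ((le_max_left _ _).trans (le_max_left _ _)) hM
  have hMT₀ : T₀ ≤ (M:ℝ) := le_trans ((le_max_right _ _).trans (le_max_left _ _)) hM
  have hMz : 1 ≤ M := by exact_mod_cast hM1
  set F : Finset ℤ := Finset.Icc 1 (M:ℤ) with hF
  have hFne : F.Nonempty := ⟨1, by simp only [hF, Finset.mem_Icc]; omega⟩
  set m : ℝ := F.inf' hFne f with hm
  obtain ⟨qs, hqsF, hqsm⟩ := Finset.exists_mem_eq_inf' hFne f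
  have hqs1 : 1 ≤ qs := (Finset.mem_Icc.mp hqsF).1
  have hqsM : qs ≤ (M:ℤ) := (Finset.mem_Icc.mp hqsF).2
  have hmf : m = f qs := by rw [hm, hqsm]
  have hmpos : 0 < m := by rw [hmf]; exact fpos qs (by omega)
  -- Dirichlet: find some q with f q < m
  obtain ⟨n, hn⟩ := exists_nat_gt (1 / m)
  have hnpos : 0 < n + 1 := Nat.succ_pos n
  obtain ⟨j, k, hk0, hkn, hjk⟩ := Real.exists_int_int_abs_mul_sub_le θ hnpos
  have hfk : f k < m := by
    have h1 : f k ≤ |(k:ℝ) * θ - j| := round_min _ _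
    have h2 : |(k:ℝ) * θ - j| ≤ 1 / ((n:ℝ) + 1 + 1) := by exact_mod_cast hjk
    have h3 : 1 / ((n:ℝ) + 1 + 1) < m := by
      rw [div_lt_iff₀ (by positivity)]
      rw [div_lt_iff₀ hmpos] at hn
      nlinarith
    linarith
  have hex : ∃ s : ℕ, 1 ≤ (s:ℤ) ∧ f s < m := by
    refine ⟨k.toNat, by omega, ?_⟩
    rwa [show ((k.toNat : ℤ)) = k by omega]
  classical
  set Q := Nat.find hex with hQ
  obtain ⟨hQ1, hfQ⟩ := Nat.find_spec hex
  have hmin : ∀ q : ℤ, 1 ≤ q → q < (Q:ℤ) → m ≤ f q := by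
    intro q h1 h2
    by_contra hc
    push_neg at hc
    have := Nat.find_min hex (m := q.toNat) (by omega)
    rw [show ((q.toNat : ℤ)) = q by omega] at this
    exact this ⟨h1, hc⟩
  have hQM : (M:ℤ) < (Q:ℤ) := by
    by_contra hc
    push_neg at hc
    have : m ≤ f (Q:ℤ) := by
      rw [hm]
      exact Finset.inf'_le f (Finset.mem_Icc.mpr ⟨hQ1, hc⟩)
    exact absurd hfQ (not_lt.2 this)
  set X : ℝ := ((Q:ℕ):ℝ) with hX
  have hXM : (M:ℝ) < X := by rw [hX]; exact_mod_cast hQM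
  have pX : (0:ℝ) < X := by linarith
  have hX1 : (1:ℝ) ≤ X := by linarith
  set P : ℤ := round (X * θ) with hP
  set ps : ℤ := round ((qs:ℝ) * θ) with hps
  have hqsQ : (qs:ℝ) < X := by
    have : (qs:ℝ) ≤ (M:ℝ) := by exact_mod_cast hqsM
    linarith
  have pqs : (0:ℝ) < (qs:ℝ) := by exact_mod_cast hqs1
  have hcast : ((((Q:ℕ):ℤ)):ℝ) = X := by rw [hX]; push_cast; ring
  have hfQX : f ((Q:ℕ):ℤ) = |X * θ - (P:ℝ)| := by
    rw [hf]; simp only; rw [hcast, hP]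
  have hfqs : f qs = |(qs:ℝ) * θ - (ps:ℝ)| := by rw [hf, hps]
  -- determinant nonzero
  have hD : qs * P - ((Q:ℕ):ℤ) * ps ≠ 0 := by
    intro hD0
    have hDR : (qs:ℝ) * P = X * ps := by
      have h0 : qs * P = ((Q:ℕ):ℤ) * ps := by omega
      have h1 : ((qs:ℝ)) * (P:ℝ) = ((((Q:ℕ):ℤ)):ℝ) * (ps:ℝ) := by exact_mod_cast h0
      rwa [hcast] at h1
    have heq : (qs:ℝ) * (X * θ - P) = X * ((qs:ℝ) * θ - ps) := by linear_combination -hDR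
    have habs : (qs:ℝ) * f ((Q:ℕ):ℤ) = X * f qs := by
      calc (qs:ℝ) * f ((Q:ℕ):ℤ) = |(qs:ℝ) * (X*θ - P)| := by
            rw [hfQX, abs_mul, abs_of_pos pqs]
        _ = |X * ((qs:ℝ)*θ - ps)| := by rw [heq]
        _ = X * f qs := by rw [abs_mul, abs_of_pos pX, hfqs]
    have h1 : (qs:ℝ) * f ((Q:ℕ):ℤ) < (qs:ℝ) * m := mul_lt_mul_of_pos_left hfQ pqs
    have h2 : (qs:ℝ) * m < X * m := mul_lt_mul_of_pos_right hqsQ hmpos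
    have h3 : X * f qs = X * m := by rw [hmf]
    linarith
  have hDabs : (1:ℝ) ≤ |(qs:ℝ) * P - X * ps| := by
    have h1 := Int.one_le_abs hD
    have : (1:ℝ) ≤ |((qs * P - ((Q:ℕ):ℤ) * ps : ℤ) : ℝ)| := by
      rw [← Int.cast_abs]; exact_mod_cast h1
    push_cast at this
    rwa [hX]
  have hkey : 1 ≤ 2 * X * m := by
    have e1 : (qs:ℝ) * P - X * ps = (qs:ℝ) * (P - X * θ) + X * ((qs:ℝ) * θ - ps) := by ring
    have e2 : |(qs:ℝ) * P - X * ps| ≤ (qs:ℝ) * f (Q:ℤ) + X * f qs := by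
      rw [e1]
      refine (abs_add_le _ _).trans ?_
      rw [abs_mul, abs_mul, abs_of_pos pqs, abs_of_pos pX, hfQX, hfqs, abs_sub_comm ((P:ℝ)) (X*θ)]
    have e3 : (qs:ℝ) * f ((Q:ℕ):ℤ) ≤ X * m := by
      have hfQnn : 0 ≤ f ((Q:ℕ):ℤ) := abs_nonneg _
      nlinarith
    have e4 : X * f qs = X * m := by rw [hmf]
    linarith
  -- now pick t := X - 1/2
  have hX1M : (M:ℝ) + 1 ≤ X := by
    rw [hX]
    have : (M:ℤ) + 1 ≤ (Q:ℤ) := hQM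
    exact_mod_cast this
  set t : ℝ := X - 1/2 with ht
  have htT : T₀ ≤ t := by rw [ht]; linarith
  obtain ⟨p, q, hq1, hqt, hle⟩ := hT₀ t htT
  have hqQ : q < ((Q:ℕ):ℤ) := by
    have h1 : (q:ℝ) ≤ X - 1/2 := hqt
    have h2 : (q:ℝ) < X := by linarith
    rw [hX] at h2
    exact_mod_cast h2
  have hlow : m ≤ (q:ℝ) * |(q:ℝ) * θ - (p:ℝ)| := by
    have h1 : m ≤ f q := hmin q hq1 hqQ
    have h2 : f q ≤ |(q:ℝ) * θ - (p:ℝ)| := round_min _ _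
    have h3 : (1:ℝ) ≤ (q:ℝ) := by exact_mod_cast hq1
    calc m ≤ |(q:ℝ) * θ - (p:ℝ)| := le_trans h1 h2
      _ = 1 * |(q:ℝ) * θ - (p:ℝ)| := (one_mul _).symm
      _ ≤ (q:ℝ) * |(q:ℝ) * θ - (p:ℝ)| := mul_le_mul_of_nonneg_right h3 (abs_nonneg _)
  -- upper estimate on t^(1-γ)
  have h2γ : (2:ℝ)^γ < X ^ (γ-2) := hM₀ X (by linarith)
  have e1 : t ^ (1-γ) ≤ (X/2) ^ (1-γ) := by
    apply Real.rpow_le_rpow_of_nonpos (by linarith) (by rw [ht]; linarith) (by linarith)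
  have e2 : (X/2)^(1-γ) * (2*X) < 1 := rpow_aux_bound X γ hX1 hγ h2γ
  have c1 : m * (2*X) ≤ t ^ (1-γ) * (2*X) :=
    mul_le_mul_of_nonneg_right (le_trans hlow hle) (by linarith)
  have c2 : t ^ (1-γ) * (2*X) ≤ (X/2)^(1-γ) * (2*X) :=
    mul_le_mul_of_nonneg_right e1 (by linarith)
  linarith

structure CFData where
  a : ℕ → ℤ
  p : ℕ → ℤ
  q : ℕ → ℤ
  ha : ∀ n, 1 ≤ a n
  hq0 : q 0 = 1
  hq1 : q 1 = 1
  hp0 : p 0 = 0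
  hp1 : p 1 = 1
  hqrec : ∀ n, q (n+2) = a n * q (n+1) + q n
  hprec : ∀ n, p (n+2) = a n * p (n+1) + p n

namespace CFData
variable (c : CFData)

lemma q_pos : ∀ n, 0 < c.q n := by
  have h : ∀ n, 0 < c.q n ∧ 0 < c.q (n+1) := by
    intro n
    induction n with
    | zero => exact ⟨by rw [c.hq0]; norm_num, by rw [c.hq1]; norm_num⟩
    | succ k ih => exact ⟨ih.2, by rw [c.hqrec]; nlinarith [c.ha k, ih.1, ih.2]⟩
  exact fun n => (h n).1

lemma q_succ_le : ∀ n, c.q n ≤ c.q (n+1) := by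
  intro n
  cases n with
  | zero => rw [c.hq0, c.hq1]
  | succ k => rw [c.hqrec]; nlinarith [c.ha k, c.q_pos k, c.q_pos (k+1)]

lemma q_mono : Monotone c.q := monotone_nat_of_le_succ c.q_succ_le

lemma q_add_le : ∀ n, c.q (n+1) + c.q n ≤ c.q (n+2) := by
  intro n
  rw [c.hqrec]
  nlinarith [c.ha n, c.q_pos n, c.q_pos (n+1)]

lemma le_q_succ : ∀ n : ℕ, (n : ℤ) ≤ c.q (n+1) := by
  intro n
  induction n with
  | zero => simp [c.q_pos 1 |>.le]
  | succ k ih =>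
      have h2 := c.q_add_le k
      have h3 := c.q_pos k
      show ((k:ℤ)+1) ≤ c.q (k+2)
      omega

lemma det : ∀ n, c.p (n+1) * c.q n - c.p n * c.q (n+1) = (-1)^n := by
  intro n
  induction n with
  | zero => rw [c.hq0, c.hq1, c.hp0, c.hp1]; ring
  | succ k ih =>
      rw [c.hqrec, c.hprec, pow_succ]
      linear_combination -ih

noncomputable def x (n : ℕ) : ℝ := (c.p n : ℝ) / (c.q n : ℝ)

noncomputable def cc (n : ℕ) : ℝ := 1 / ((c.q n : ℝ) * (c.q (n+1) : ℝ))

lemma qR_pos (n : ℕ) : (0:ℝ) < (c.q n : ℝ) := by exact_mod_cast c.q_pos n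

lemma cc_pos (n : ℕ) : 0 < c.cc n := by
  rw [cc]
  have h0 := c.qR_pos n
  have h1 := c.qR_pos (n+1)
  positivity

lemma x_diff (n : ℕ) : c.x (n+1) - c.x n = (-1)^n * c.cc n := by
  have h0 := c.qR_pos n
  have h1 := c.qR_pos (n+1)
  rw [x, x, cc]
  rw [div_sub_div _ _ (ne_of_gt h1) (ne_of_gt h0)]
  have hdet : (c.p (n+1) : ℝ) * (c.q n : ℝ) - (c.p n : ℝ) * (c.q (n+1) : ℝ) = (-1:ℝ)^n := by
    exact_mod_cast c.det n
  have hdet2 : (c.p (n+1) : ℝ) * (c.q n : ℝ) - (c.q (n+1) : ℝ) * (c.p n : ℝ) = (-1:ℝ)^n := by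
    linear_combination hdet
  rw [hdet2]
  rw [mul_one_div]
  rw [mul_comm ((c.q n : ℝ)) ((c.q (n+1) : ℝ))]

lemma cc_strict (n : ℕ) : c.cc (n+1) < c.cc n := by
  rw [cc, cc]
  have h0 := c.qR_pos n
  have h1 := c.qR_pos (n+1)
  have h2 := c.qR_pos (n+2)
  apply div_lt_div_of_pos_left one_pos (by positivity)
  have : (c.q n : ℝ) < (c.q (n+2) : ℝ) := by
    have := c.q_add_le n
    have := c.q_pos (n+1)
    push_cast
    exact_mod_cast by omega
  nlinarith

lemma x_even_step (k : ℕ) : c.x (2*k+2) = c.x (2*k) + c.cc (2*k) - c.cc (2*k+1) := by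
  have h1 := c.x_diff (2*k)
  have h2 := c.x_diff (2*k+1)
  have e1 : ((-1:ℝ))^(2*k) = 1 := Even.neg_one_pow ⟨k, by ring⟩
  have e2 : ((-1:ℝ))^(2*k+1) = -1 := Odd.neg_one_pow ⟨k, by ring⟩
  rw [e1] at h1; rw [e2] at h2
  have : c.x (2*k+1+1) = c.x (2*k+2) := by norm_num
  linarith [h1, h2]

lemma x_even_mono : Monotone (fun k => c.x (2*k)) := by
  apply monotone_nat_of_le_succ
  intro k
  show c.x (2*k) ≤ c.x (2*(k+1))
  rw [show 2*(k+1) = 2*k+2 from by ring]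
  linarith [c.x_even_step k, c.cc_strict (2*k)]

lemma x_odd_anti : Antitone (fun j => c.x (2*j+1)) := by
  apply antitone_nat_of_succ_le
  intro j
  show c.x (2*(j+1)+1) ≤ c.x (2*j+1)
  rw [show 2*(j+1)+1 = 2*j+3 from by ring]
  have h1 := c.x_diff (2*j+1)
  have h2 := c.x_diff (2*j+2)
  have f1 : ((-1:ℝ))^(2*j+1) = -1 := Odd.neg_one_pow ⟨j, rfl⟩
  have f2 : ((-1:ℝ))^(2*j+2) = 1 := Even.neg_one_pow ⟨j+1, by ring⟩
  rw [f1, show 2*j+1+1 = 2*j+2 from by ring] at h1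
  rw [f2, show 2*j+2+1 = 2*j+3 from by ring, one_mul] at h2
  linarith [c.cc_strict (2*j+1)]

lemma x_even_lt_odd (k j : ℕ) : c.x (2*k) ≤ c.x (2*j+1) := by
  set m := max k j with hm
  have h1 : c.x (2*k) ≤ c.x (2*m) := c.x_even_mono (le_max_left k j)
  have h2 : c.x (2*m) ≤ c.x (2*m+1) := by
    have := c.x_diff (2*m)
    have e1 : ((-1:ℝ))^(2*m) = 1 := Even.neg_one_pow ⟨m, by ring⟩
    rw [e1, one_mul] at this
    linarith [c.cc_pos (2*m)]
  have h3 : c.x (2*m+1) ≤ c.x (2*j+1) := c.x_odd_anti (le_max_right k j)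
  linarith

noncomputable def θ : ℝ := sSup (Set.range fun k => c.x (2*k))

lemma theta_ge (k : ℕ) : c.x (2*k) ≤ c.θ := by
  apply le_csSup
  · exact ⟨c.x 1, by rintro y ⟨k, rfl⟩; simpa using c.x_even_lt_odd k 0⟩
  · exact ⟨k, rfl⟩

lemma theta_le (j : ℕ) : c.θ ≤ c.x (2*j+1) := by
  apply csSup_le
  · exact ⟨c.x (2*0), ⟨0, rfl⟩⟩
  · rintro y ⟨k, rfl⟩
    exact c.x_even_lt_odd k j

lemma theta_bounds (n : ℕ) :
    c.cc n - c.cc (n+1) ≤ (-1:ℝ)^n * (c.θ - c.x n) ∧ (-1:ℝ)^n * (c.θ - c.x n) ≤ c.cc n := by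
  rcases Nat.even_or_odd n with ⟨k, hk⟩ | ⟨k, hk⟩
  · subst hk
    have e1 : ((-1:ℝ))^(k+k) = 1 := Even.neg_one_pow ⟨k, rfl⟩
    rw [e1, one_mul]
    have hk2 : k + k = 2*k := by ring
    rw [hk2]
    have hub : c.θ ≤ c.x (2*k+1) := c.theta_le k
    have hlb : c.x (2*k+2) ≤ c.θ := by
      have := c.theta_ge (k+1)
      have e : 2*(k+1) = 2*k+2 := by ring
      rwa [e] at this
    have hstep := c.x_even_step k
    have hx1 : c.x (2*k+1) = c.x (2*k) + c.cc (2*k) := by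
      have := c.x_diff (2*k)
      have e1 : ((-1:ℝ))^(2*k) = 1 := Even.neg_one_pow ⟨k, by ring⟩
      rw [e1] at this
      linarith
    constructor <;> linarith
  · subst hk
    have e2 : ((-1:ℝ))^(2*k+1) = -1 := Odd.neg_one_pow ⟨k, rfl⟩
    rw [e2]
    have f1 : ((-1:ℝ))^(2*k+1) = -1 := Odd.neg_one_pow ⟨k, rfl⟩
    have f2 : ((-1:ℝ))^(2*k+2) = 1 := Even.neg_one_pow ⟨k+1, by ring⟩
    have hub : c.θ ≤ c.x (2*k+3) := by
      have := c.theta_le (k+1)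
      rwa [show 2*(k+1)+1 = 2*k+3 from by ring] at this
    have hlb : c.x (2*k+2) ≤ c.θ := by
      have := c.theta_ge (k+1)
      rwa [show 2*(k+1) = 2*k+2 from by ring] at this
    have h1 : c.x (2*k+2) - c.x (2*k+1) = -1 * c.cc (2*k+1) := by
      have := c.x_diff (2*k+1)
      rwa [f1, show 2*k+1+1 = 2*k+2 from by ring] at this
    have h2 : c.x (2*k+3) - c.x (2*k+2) = c.cc (2*k+2) := by
      have := c.x_diff (2*k+2)
      rw [f2, one_mul] at this
      rwa [show 2*k+2+1 = 2*k+3 from by ring] at this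
    rw [show 2*k+1+1 = 2*k+2 from by ring]
    constructor <;> linarith

noncomputable def δ (n : ℕ) : ℝ := (c.q n : ℝ) * c.θ - (c.p n : ℝ)

lemma delta_eq (n : ℕ) : c.δ n = (c.q n : ℝ) * (c.θ - c.x n) := by
  rw [δ, x]
  have h0 := c.qR_pos n
  field_simp

lemma delta_sign (n : ℕ) : 0 < (-1:ℝ)^n * c.δ n := by
  rw [delta_eq]
  have hb := (c.theta_bounds n).1
  have hcc := c.cc_strict n
  have h0 := c.qR_pos n
  have key : 0 < (-1:ℝ)^n * (c.θ - c.x n) := by linarith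
  calc (0:ℝ) < (c.q n : ℝ) * ((-1:ℝ)^n * (c.θ - c.x n)) := by positivity
    _ = (-1:ℝ)^n * ((c.q n : ℝ) * (c.θ - c.x n)) := by ring

lemma delta_abs (n : ℕ) : |c.δ n| = (-1:ℝ)^n * c.δ n := by
  rcases Nat.even_or_odd n with he | ho
  · rw [he.neg_one_pow, one_mul]
    apply abs_of_pos
    have := c.delta_sign n
    rwa [he.neg_one_pow, one_mul] at this
  · rw [ho.neg_one_pow, neg_one_mul]
    apply abs_of_neg
    have := c.delta_sign n
    rw [ho.neg_one_pow, neg_one_mul] at this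
    linarith

lemma delta_ne (n : ℕ) : c.δ n ≠ 0 := by
  intro h
  have := c.delta_sign n
  rw [h, mul_zero] at this
  exact lt_irrefl 0 this

lemma delta_opp (n : ℕ) : c.δ n * c.δ (n+1) < 0 := by
  have h1 := c.delta_sign n
  have h2 := c.delta_sign (n+1)
  have key : 0 < ((-1:ℝ)^n * c.δ n) * ((-1:ℝ)^(n+1) * c.δ (n+1)) := mul_pos h1 h2
  have e : ((-1:ℝ)^n * c.δ n) * ((-1:ℝ)^(n+1) * c.δ (n+1))
      = ((-1:ℝ)^(2*n+1)) * (c.δ n * c.δ (n+1)) := by ring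
  have e2 : ((-1:ℝ))^(2*n+1) = -1 := Odd.neg_one_pow ⟨n, rfl⟩
  rw [e, e2] at key
  linarith

lemma delta_upper (n : ℕ) : |c.δ n| ≤ 1 / (c.q (n+1) : ℝ) := by
  rw [delta_abs, delta_eq]
  have hb := (c.theta_bounds n).2
  have h0 := c.qR_pos n
  have h1 := c.qR_pos (n+1)
  have key : (-1:ℝ)^n * ((c.q n:ℝ) * (c.θ - c.x n)) = (c.q n:ℝ) * ((-1:ℝ)^n * (c.θ - c.x n)) := by
    ring
  rw [key]
  calc (c.q n:ℝ) * ((-1:ℝ)^n * (c.θ - c.x n)) ≤ (c.q n:ℝ) * c.cc n :=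
        mul_le_mul_of_nonneg_left hb h0.le
    _ = 1 / (c.q (n+1) : ℝ) := by rw [cc]; field_simp

lemma delta_lower (n : ℕ) : 1 / (2 * (c.q (n+1) : ℝ)) ≤ |c.δ n| := by
  rw [delta_abs, delta_eq]
  have hb := (c.theta_bounds n).1
  have h0 := c.qR_pos n
  have h1 := c.qR_pos (n+1)
  have h2 := c.qR_pos (n+2)
  have key : (-1:ℝ)^n * ((c.q n:ℝ) * (c.θ - c.x n)) = (c.q n:ℝ) * ((-1:ℝ)^n * (c.θ - c.x n)) := by
    ring
  rw [key]
  have step1 : (c.q n:ℝ) * (c.cc n - c.cc (n+1)) ≤ (c.q n:ℝ) * ((-1:ℝ)^n * (c.θ - c.x n)) :=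
    mul_le_mul_of_nonneg_left hb h0.le
  refine le_trans ?_ step1
  rw [cc, cc]
  -- goal : 1/(2 q_{n+1}) ≤ q_n (1/(q_n q_{n+1}) - 1/(q_{n+1} q_{n+2}))
  -- i.e. 1/(2 q_{n+1}) ≤ 1/q_{n+1} - q_n/(q_{n+1} q_{n+2}),  using 2 q_n ≤ q_{n+2}
  have hq2 : 2 * (c.q n : ℝ) ≤ (c.q (n+2) : ℝ) := by
    have ha := c.q_add_le n
    have hm : c.q n ≤ c.q (n+1) := c.q_succ_le n
    have : 2 * c.q n ≤ c.q (n+2) := by omega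
    exact_mod_cast this
  rw [div_le_iff₀ (by positivity)]
  have expand : (c.q n:ℝ) * (1 / ((c.q n:ℝ) * (c.q (n+1):ℝ)) - 1 / ((c.q (n+1):ℝ) * (c.q (n+2):ℝ)))
      * (2 * (c.q (n+1):ℝ))
      = 2 - 2 * (c.q n:ℝ) / (c.q (n+2):ℝ) := by
    field_simp
  rw [expand]
  have : 2 * (c.q n:ℝ) / (c.q (n+2):ℝ) ≤ 1 := by
    rw [div_le_one h2]
    linarith
  linarith

/-- Best approximation property. -/
lemma best (n : ℕ) (p q : ℤ) (hq : 1 ≤ q) (hlt : q < c.q (n+1)) :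
    |c.δ n| ≤ |(q:ℝ) * c.θ - (p:ℝ)| := by
  classical
  set E : ℤ := (-1)^n with hE
  have hEE : E * E = 1 := by
    rw [hE, ← pow_add]
    exact Even.neg_one_pow ⟨n, rfl⟩
  set xx : ℤ := E * (q * c.p (n+1) - p * c.q (n+1)) with hxx
  set yy : ℤ := E * (p * c.q n - q * c.p n) with hyy
  have hdet : c.p (n+1) * c.q n - c.p n * c.q (n+1) = E := c.det n
  have hxp : xx * c.p n + yy * c.p (n+1) = p := by
    have : xx * c.p n + yy * c.p (n+1)
        = E * p * (c.p (n+1) * c.q n - c.p n * c.q (n+1)) := by rw [hxx, hyy]; ring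
    rw [this, hdet]
    linear_combination p * hEE
  have hqe : xx * c.q n + yy * c.q (n+1) = q := by
    have : xx * c.q n + yy * c.q (n+1)
        = E * q * (c.p (n+1) * c.q n - c.p n * c.q (n+1)) := by rw [hxx, hyy]; ring
    rw [this, hdet]
    linear_combination q * hEE
  have hreal : (q:ℝ) * c.θ - (p:ℝ) = (xx:ℝ) * c.δ n + (yy:ℝ) * c.δ (n+1) := by
    rw [δ, δ]
    have h1 : ((xx : ℝ)) * (c.p n : ℝ) + (yy:ℝ) * (c.p (n+1) : ℝ) = (p:ℝ) := by
      exact_mod_cast hxp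
    have h2 : ((xx : ℝ)) * (c.q n : ℝ) + (yy:ℝ) * (c.q (n+1) : ℝ) = (q:ℝ) := by
      exact_mod_cast hqe
    linear_combination (-c.θ) * h2 + h1
  rcases eq_or_ne yy 0 with hy0 | hyne
  · -- q = xx * q n, xx ≥ 1
    rw [hy0] at hqe hreal
    simp at hqe hreal
    have hq0 := c.q_pos n
    have hxx1 : 1 ≤ xx := by nlinarith
    rw [hreal, abs_mul]
    have h1 : (1:ℝ) ≤ |(xx:ℝ)| := by
      rw [abs_of_pos (by exact_mod_cast hxx1 : (0:ℝ) < (xx:ℝ))]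
      exact_mod_cast hxx1
    nlinarith [abs_nonneg (c.δ n)]
  · have hxne : xx ≠ 0 := by
      intro hx0
      rw [hx0] at hqe
      simp at hqe
      have hq1p := c.q_pos (n+1)
      -- q = yy * q (n+1) with q ≥ 1 and q < q (n+1): impossible
      rcases lt_or_gt_of_ne hyne with hneg | hpos
      · nlinarith
      · nlinarith
    -- opposite signs
    have hq0 := c.q_pos n
    have hq1p := c.q_pos (n+1)
    have hsigns : (1 ≤ xx ∧ yy ≤ -1) ∨ (xx ≤ -1 ∧ 1 ≤ yy) := by
      rcases lt_or_gt_of_ne hxne with hxneg | hxpos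
      · rcases lt_or_gt_of_ne hyne with hyneg | hypos
        · exfalso; nlinarith
        · right; exact ⟨by omega, by omega⟩
      · rcases lt_or_gt_of_ne hyne with hyneg | hypos
        · left; exact ⟨by omega, by omega⟩
        · exfalso
          have hxx1 : 1 ≤ xx := hxpos
          have hyy1 : 1 ≤ yy := hypos
          nlinarith
    have hopp := c.delta_opp n
    have habs : ∀ A B : ℝ, 1 ≤ A → B ≤ -1 →
        |c.δ n| ≤ |A * c.δ n + B * c.δ (n+1)| := by
      intro A B hA hB
      rcases lt_or_gt_of_ne (c.delta_ne n) with hdn | hdn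
      · -- δ n < 0, so δ (n+1) > 0
        have hdn1 : 0 < c.δ (n+1) := by nlinarith
        have h1 : A * c.δ n + B * c.δ (n+1) ≤ c.δ n := by nlinarith
        rw [abs_of_neg hdn]
        rw [abs_of_neg (by linarith : A * c.δ n + B * c.δ (n+1) < 0)]
        linarith
      · have hdn1 : c.δ (n+1) < 0 := by nlinarith
        have h1 : c.δ n ≤ A * c.δ n + B * c.δ (n+1) := by nlinarith
        rw [abs_of_pos hdn]
        rw [abs_of_pos (by linarith : 0 < A * c.δ n + B * c.δ (n+1))]
        linarith
    rcases hsigns with ⟨hx1, hy1⟩ | ⟨hx1, hy1⟩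
    · rw [hreal]
      exact habs (xx:ℝ) (yy:ℝ) (by exact_mod_cast hx1) (by exact_mod_cast hy1)
    · have h' := habs (((-xx : ℤ)):ℝ) (((-yy : ℤ)):ℝ)
        (by exact_mod_cast (by omega : 1 ≤ -xx))
        (by exact_mod_cast (by omega : -yy ≤ -1))
      have e : ((-xx : ℤ):ℝ) * c.δ n + ((-yy : ℤ):ℝ) * c.δ (n+1)
          = -((xx:ℝ) * c.δ n + (yy:ℝ) * c.δ (n+1)) := by push_cast; ring
      rw [e, abs_neg] at h'
      rw [hreal]
      exact h'

lemma theta_irrational : Irrational c.θ := by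
  rw [Irrational]
  rintro ⟨r, hr⟩
  have hd0 : (0:ℝ) < (r.den:ℝ) := by exact_mod_cast r.pos
  have hqbig : (r.den : ℤ) + 1 ≤ c.q (r.den+1+1) := by
    have h := c.le_q_succ (r.den+1)
    push_cast at h
    omega
  set n : ℕ := r.den + 1 with hn
  have hnum : c.δ n = ((c.q n * r.num - c.p n * (r.den:ℤ) : ℤ) : ℝ) / (r.den:ℝ) := by
    rw [δ, ← hr, Rat.cast_def]
    push_cast
    field_simp
  have hne : c.q n * r.num - c.p n * (r.den:ℤ) ≠ 0 := by
    intro h0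
    apply c.delta_ne n
    rw [hnum, h0]
    simp
  have h1 : (1:ℝ) ≤ |((c.q n * r.num - c.p n * (r.den:ℤ) : ℤ) : ℝ)| := by
    rw [← Int.cast_abs]
    exact_mod_cast Int.one_le_abs hne
  have h2 : 1/(r.den:ℝ) ≤ |c.δ n| := by
    rw [hnum, abs_div, abs_of_pos hd0]
    gcongr
  have h3 := c.delta_upper n
  have h4 : 1 / (c.q (n+1) : ℝ) ≤ 1 / ((r.den:ℝ)+1) := by
    apply one_div_le_one_div_of_le (by positivity)
    exact_mod_cast hqbig
  have hc2 : 1/((r.den:ℝ)+1) < 1/(r.den:ℝ) := by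
    apply one_div_lt_one_div_of_lt hd0
    linarith
  linarith

lemma exists_q_gt (t : ℝ) : ∃ m : ℕ, t < (c.q (m+1) : ℝ) := by
  obtain ⟨m, hm⟩ := exists_nat_gt t
  exact ⟨m, lt_of_lt_of_le hm (by exact_mod_cast c.le_q_succ m)⟩

lemma q_rpow_le (n : ℕ) (hn : 1 ≤ n) (b : ℝ) (hb : 0 < b)
    (hgl : ∀ m, ((c.q (m+1):ℝ))^b ≤ (c.q (m+2):ℝ)) :
    (c.q n : ℝ) ≤ (c.q (n+1) : ℝ) ^ (1/b) := by
  have hpow : ((c.q n:ℝ))^b ≤ (c.q (n+1):ℝ) := by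
    have := hgl (n-1)
    rwa [show n-1+1 = n by omega, show n-1+2 = n+1 by omega] at this
  have h0 := c.qR_pos n
  have e1 : ((c.q n:ℝ)^b)^(1/b) = (c.q n:ℝ) := by
    rw [← Real.rpow_mul h0.le, mul_one_div_cancel (by linarith : b ≠ 0), Real.rpow_one]
  calc (c.q n:ℝ) = ((c.q n:ℝ)^b)^(1/b) := e1.symm
    _ ≤ (c.q (n+1):ℝ)^(1/b) := Real.rpow_le_rpow (by positivity) hpow (by positivity)

/-- Lower bound direction : SCond holds for 1 < γ < 2 - 1/b. -/
lemma cf_scond (b γ : ℝ) (hb : 1 < b)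
    (hgl : ∀ n, ((c.q (n+1):ℝ))^b ≤ (c.q (n+2):ℝ))
    (hγ1 : 1 < γ) (hγ : γ < 2 - 1/b) : SCond c.θ γ := by
  rw [SCond]
  filter_upwards [eventually_ge_atTop (1:ℝ)] with t ht
  classical
  have hex : ∃ m : ℕ, t < (c.q (m+1) : ℝ) := c.exists_q_gt t
  set k := Nat.find hex with hk
  have hk1 : t < (c.q (k+1) : ℝ) := Nat.find_spec hex
  have hkpos : 1 ≤ k := by
    by_contra h
    push_neg at h
    have hk0 : k = 0 := by omega
    rw [hk0] at hk1
    rw [c.hq1] at hk1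
    norm_num at hk1
    linarith
  have hqk : (c.q k : ℝ) ≤ t := by
    have h := Nat.find_min hex (show k - 1 < k by omega)
    push_neg at h
    rwa [show k - 1 + 1 = k by omega] at h
  refine ⟨c.p k, c.q k, by have := c.q_pos k; omega, hqk, ?_⟩
  have h0 := c.qR_pos k
  have h1 := c.qR_pos (k+1)
  have hgoal : |(c.q k:ℝ) * c.θ - (c.p k:ℝ)| = |c.δ k| := rfl
  rw [hgoal]
  have s1 : (c.q k:ℝ) * |c.δ k| ≤ (c.q k:ℝ) / (c.q (k+1):ℝ) := by
    rw [div_eq_mul_one_div]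
    exact mul_le_mul_of_nonneg_left (c.delta_upper k) h0.le
  have hqk1 : (c.q k : ℝ) ≤ (c.q (k+1):ℝ)^(1/b) :=
    c.q_rpow_le k hkpos b (by linarith) hgl
  have hq1R : (1:ℝ) ≤ (c.q (k+1):ℝ) := by
    have := c.q_pos (k+1)
    exact_mod_cast this
  have s2 : (c.q k:ℝ)/(c.q (k+1):ℝ) ≤ (c.q (k+1):ℝ)^(1/b - 1) := by
    rw [Real.rpow_sub (by linarith), Real.rpow_one]
    gcongr
  have s3 : (c.q (k+1):ℝ)^(1/b-1) ≤ (c.q (k+1):ℝ)^(1-γ) :=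
    Real.rpow_le_rpow_of_exponent_le hq1R (by linarith)
  have s4 : (c.q (k+1):ℝ)^(1-γ) ≤ t^(1-γ) :=
    Real.rpow_le_rpow_of_nonpos (by linarith) hk1.le (by linarith)
  linarith

lemma rpow_aux2 (Y γ w : ℝ) (hY1 : 1 ≤ Y) (h : 6 * 2^(γ-1) < Y^(γ-w)) :
    (Y/2)^(1-γ) * 6 < Y^(1-w) := by
  have pY : (0:ℝ) < Y := by linarith
  rw [Real.div_rpow (by linarith) (by norm_num : (0:ℝ) ≤ 2)]
  have i1 : Y^(1-γ) * Y^(γ-w) = Y^(1-w) := by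
    rw [← Real.rpow_add pY]; ring_nf
  have i2 : (2:ℝ)^(1-γ) * (2:ℝ)^(γ-1) = 1 := by
    rw [← Real.rpow_add (by norm_num : (0:ℝ) < 2)]; norm_num
  have pa : (0:ℝ) < Y^(1-γ) := Real.rpow_pos_of_pos pY _
  have pb : (0:ℝ) < (2:ℝ)^(1-γ) := Real.rpow_pos_of_pos (by norm_num) _
  have pc : (0:ℝ) < Y^(γ-w) := Real.rpow_pos_of_pos pY _
  have pd : (0:ℝ) < (2:ℝ)^(γ-1) := Real.rpow_pos_of_pos (by norm_num) _
  rw [div_mul_eq_mul_div, div_lt_iff₀ pb]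
  -- goal : Y^(1-γ) * 6 < Y^(1-w) * 2^(1-γ)
  nlinarith [mul_lt_mul_of_pos_left h (mul_pos pa pb)]

/-- Upper bound direction : SCond fails for γ > 2 - 1/b. -/
lemma cf_not_scond (b γ : ℝ) (hb : 1 < b)
    (hgl : ∀ n, ((c.q (n+1):ℝ))^b ≤ (c.q (n+2):ℝ))
    (hgu : ∀ n, (c.q (n+2):ℝ) ≤ 3*((c.q (n+1):ℝ))^b)
    (hγ : 2 - 1/b < γ) : ¬ SCond c.θ γ := by
  have hbpos : (0:ℝ) < b := by linarith
  have hinv : 1/b < 1 := by rw [div_lt_one hbpos]; linarith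
  have hinvpos : 0 < 1/b := by positivity
  have hγ1 : 1 < γ := by linarith
  intro h
  rw [SCond, eventually_atTop] at h
  obtain ⟨T₀, hT₀⟩ := h
  have hMex : ∀ᶠ x:ℝ in atTop, 6 * 2^(γ-1) < x^(γ-(2-1/b)) :=
    (tendsto_rpow_atTop (by linarith : 0 < γ-(2-1/b))).eventually_gt_atTop _
  rw [eventually_atTop] at hMex
  obtain ⟨M₀, hM₀⟩ := hMex
  obtain ⟨N, hN⟩ := exists_nat_ge (max (max M₀ (T₀+1)) 1)
  have hNM₀ : M₀ ≤ (N:ℝ) := le_trans ((le_max_left _ _).trans (le_max_left _ _)) hN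
  have hNT₀ : T₀ + 1 ≤ (N:ℝ) := le_trans ((le_max_right _ _).trans (le_max_left _ _)) hN
  have hN1R : (1:ℝ) ≤ (N:ℝ) := le_trans (le_max_right _ _) hN
  have hN1 : 1 ≤ N := by exact_mod_cast hN1R
  set Y : ℝ := (c.q (N+1) : ℝ) with hY
  have hYN : (N:ℝ) ≤ Y := by rw [hY]; exact_mod_cast c.le_q_succ N
  have hY1 : (1:ℝ) ≤ Y := le_trans hN1R hYN
  set t : ℝ := Y - 1/2 with htdef
  obtain ⟨p, q, hq1, hqt, hle⟩ := hT₀ t (by rw [htdef]; linarith)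
  have hqY : (q:ℝ) < Y := by rw [htdef] at hqt; linarith
  have hqlt : q < c.q (N+1) := by rw [hY] at hqY; exact_mod_cast hqY
  classical
  have hex : ∃ m : ℕ, q < c.q (m+1) := ⟨N, hqlt⟩
  set k := Nat.find hex with hk
  have hk1 : q < c.q (k+1) := Nat.find_spec hex
  have hkN : k ≤ N := Nat.find_min' hex hqlt
  have hqk : c.q k ≤ q := by
    rcases Nat.eq_zero_or_pos k with hk0 | hkpos
    · rw [hk0, c.hq0]; exact hq1
    · have h := Nat.find_min hex (show k-1 < k by omega)
      push_neg at h
      rwa [show k-1+1 = k by omega] at h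
  have h0 := c.qR_pos k
  have h1 := c.qR_pos (k+1)
  have hbest := c.best k p q hq1 hk1
  have hdl := c.delta_lower k
  have hqReal : (c.q k : ℝ) ≤ (q:ℝ) := by exact_mod_cast hqk
  have low1 : (c.q k:ℝ) / (2 * (c.q (k+1):ℝ)) ≤ (q:ℝ)*|(q:ℝ)*c.θ - (p:ℝ)| := by
    calc (c.q k:ℝ) / (2 * (c.q (k+1):ℝ)) = (c.q k:ℝ) * (1/(2 * (c.q (k+1):ℝ))) := by ring
      _ ≤ (c.q k:ℝ) * |c.δ k| := mul_le_mul_of_nonneg_left hdl h0.le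
      _ ≤ (q:ℝ) * |(q:ℝ)*c.θ - (p:ℝ)| := by
          apply mul_le_mul hqReal hbest (abs_nonneg _) (by linarith)
  have low2 : Y^(1/b-1)/6 ≤ (c.q k:ℝ)/(2*(c.q (k+1):ℝ)) := by
    have hYpow_le_one : Y^(1/b-1) ≤ 1 :=
      Real.rpow_le_one_of_one_le_of_nonpos hY1 (by linarith)
    rcases Nat.eq_zero_or_pos k with hk0 | hkpos
    · rw [hk0, c.hq0, c.hq1]
      push_cast
      linarith
    · have hqub : (c.q (k+1):ℝ) ≤ 3*((c.q k:ℝ))^b := by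
        have := hgu (k-1)
        rwa [show k-1+1 = k by omega, show k-1+2 = k+1 by omega] at this
      have hqkbpos : (0:ℝ) < (c.q k:ℝ)^b := Real.rpow_pos_of_pos h0 _
      have step1 : (c.q k:ℝ)/(6*((c.q k:ℝ))^b) ≤ (c.q k:ℝ)/(2*(c.q (k+1):ℝ)) := by
        rw [div_le_div_iff₀ (by positivity) (by positivity)]
        nlinarith [hqub, h0.le, h1]
      have step2 : (c.q k:ℝ)/(6*((c.q k:ℝ))^b) = ((c.q k:ℝ)^(1-b))/6 := by
        rw [Real.rpow_sub h0, Real.rpow_one]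
        ring
      have hqkN : (c.q k : ℝ) ≤ (c.q N : ℝ) := by exact_mod_cast c.q_mono hkN
      have hqNpos := c.qR_pos N
      have step3 : ((c.q N:ℝ))^(1-b) ≤ ((c.q k:ℝ))^(1-b) :=
        Real.rpow_le_rpow_of_nonpos h0 hqkN (by linarith)
      have step4 : (c.q N : ℝ) ≤ Y^(1/b) := by
        rw [hY]; exact c.q_rpow_le N hN1 b hbpos hgl
      have step5 : (Y^(1/b))^(1-b) ≤ ((c.q N:ℝ))^(1-b) :=
        Real.rpow_le_rpow_of_nonpos hqNpos step4 (by linarith)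
      have step6 : (Y^(1/b))^(1-b) = Y^(1/b-1) := by
        rw [← Real.rpow_mul (by linarith : (0:ℝ) ≤ Y)]
        congr 1
        field_simp
      calc Y^(1/b-1)/6 = (Y^(1/b))^(1-b)/6 := by rw [step6]
        _ ≤ ((c.q N:ℝ))^(1-b)/6 := by linarith
        _ ≤ ((c.q k:ℝ))^(1-b)/6 := by linarith
        _ = (c.q k:ℝ)/(6*((c.q k:ℝ))^b) := step2.symm
        _ ≤ (c.q k:ℝ)/(2*(c.q (k+1):ℝ)) := step1
  have up2 : t^(1-γ) ≤ (Y/2)^(1-γ) := by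
    apply Real.rpow_le_rpow_of_nonpos (by linarith) (by rw [htdef]; linarith) (by linarith)
  have up3 : (Y/2)^(1-γ) * 6 < Y^(1-(2-1/b)) := rpow_aux2 Y γ (2-1/b) hY1 (hM₀ Y (by linarith))
  rw [show (1:ℝ)-(2-1/b) = 1/b-1 by ring] at up3
  linarith


end CFData
noncomputable def bseq (b : ℝ) : ℕ → ℤ × ℤ × ℤ × ℤ
  | 0 => (1, 1, 0, 1)
  | n+1 =>
    let s := bseq b n
    (s.2.1, ⌈(s.2.1:ℝ)^(b-1)⌉ * s.2.1 + s.1, s.2.2.2, ⌈(s.2.1:ℝ)^(b-1)⌉ * s.2.2.2 + s.2.2.1)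

lemma bseq_pos (b : ℝ) (hb : 1 ≤ b) : ∀ n, 1 ≤ (bseq b n).1 ∧ 1 ≤ (bseq b n).2.1 := by
  intro n
  induction n with
  | zero => exact ⟨le_refl 1, le_refl 1⟩
  | succ k ih =>
      obtain ⟨h1, h2⟩ := ih
      constructor
      · exact h2
      · show 1 ≤ ⌈((bseq b k).2.1:ℝ)^(b-1)⌉ * (bseq b k).2.1 + (bseq b k).1
        have hpos : (0:ℝ) < ((bseq b k).2.1:ℝ)^(b-1) := by
          apply Real.rpow_pos_of_pos
          exact_mod_cast lt_of_lt_of_le zero_lt_one h2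
        have hceil : 1 ≤ ⌈((bseq b k).2.1:ℝ)^(b-1)⌉ := Int.ceil_pos.mpr hpos
        nlinarith

noncomputable def cfOfB (b : ℝ) (hb : 1 ≤ b) : CFData where
  a := fun n => ⌈(((bseq b n).2.1):ℝ)^(b-1)⌉
  p := fun n => (bseq b n).2.2.1
  q := fun n => (bseq b n).1
  ha := by
    intro n
    have h2 := (bseq_pos b hb n).2
    have hpos : (0:ℝ) < ((bseq b n).2.1:ℝ)^(b-1) := by
      apply Real.rpow_pos_of_pos
      exact_mod_cast lt_of_lt_of_le zero_lt_one h2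
    exact Int.ceil_pos.mpr hpos
  hq0 := rfl
  hq1 := rfl
  hp0 := rfl
  hp1 := rfl
  hqrec := fun n => rfl
  hprec := fun n => rfl

lemma cfOfB_a (b : ℝ) (hb : 1 ≤ b) (n : ℕ) :
    (cfOfB b hb).a n = ⌈(((cfOfB b hb).q (n+1)):ℝ)^(b-1)⌉ := rfl

lemma cfOfB_growth (b : ℝ) (hb : 1 ≤ b) (n : ℕ) :
    (((cfOfB b hb).q (n+1):ℝ))^b ≤ ((cfOfB b hb).q (n+2):ℝ) ∧
    ((cfOfB b hb).q (n+2):ℝ) ≤ 3*(((cfOfB b hb).q (n+1):ℝ))^b := by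
  set c := cfOfB b hb with hc
  set Q : ℝ := (c.q (n+1) : ℝ) with hQ
  have hQ1 : (1:ℝ) ≤ Q := by
    rw [hQ]
    exact_mod_cast c.q_pos (n+1)
  have hQ0 : (0:ℝ) < Q := by linarith
  have hqn1 : (1:ℝ) ≤ (c.q n : ℝ) := by exact_mod_cast c.q_pos n
  have hqnQ : (c.q n : ℝ) ≤ Q := by rw [hQ]; exact_mod_cast c.q_succ_le n
  have hrec : (c.q (n+2) : ℝ) = (⌈Q^(b-1)⌉ : ℝ) * Q + (c.q n : ℝ) := by
    have := c.hqrec n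
    rw [hc] at this ⊢
    rw [cfOfB_a b hb n] at this
    rw [this]
    push_cast
    rw [hQ, hc]
  have hpow : Q^(b-1) * Q = Q^b := by
    rw [← Real.rpow_add_one (ne_of_gt hQ0)]
    congr 1
    ring
  have hceil_low : Q^(b-1) ≤ (⌈Q^(b-1)⌉ : ℝ) := Int.le_ceil _
  have hceil_up : (⌈Q^(b-1)⌉ : ℝ) ≤ Q^(b-1) + 1 := le_of_lt (Int.ceil_lt_add_one _)
  have hQb : Q ≤ Q^b := by
    calc Q = Q^(1:ℝ) := (Real.rpow_one Q).symm
      _ ≤ Q^b := Real.rpow_le_rpow_of_exponent_le hQ1 hb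
  constructor
  · rw [hrec]
    nlinarith
  · rw [hrec]
    nlinarith

open Nat
lemma liouville_scond (γ : ℝ) (hγ : γ < 2) : SCond (liouvilleNumber 2) γ := by
  rcases le_or_gt γ 1 with hγ1 | hγ1
  · exact scond_of_le_one _ hγ1
  have h2γ : (0:ℝ) < 2 - γ := by linarith
  obtain ⟨N, hN⟩ := exists_nat_ge (3/(2-γ))
  have hN3 : (3:ℝ) ≤ (N:ℝ) := by
    have : (3:ℝ) < 3/(2-γ) := by
      rw [lt_div_iff₀ h2γ]
      nlinarith
    linarith
  have hNcond : 3 ≤ (2-γ)*((N:ℝ)+1) := by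
    rw [div_le_iff₀ h2γ] at hN
    nlinarith
  rw [SCond]
  filter_upwards [eventually_ge_atTop ((2:ℝ)^(N !)), eventually_ge_atTop (1:ℝ)] with t htN ht1
  classical
  have h2N : (2:ℝ) ≤ (2:ℝ)^(N !) := by
    calc (2:ℝ) = 2^1 := (pow_one 2).symm
      _ ≤ 2^(N !) := by
          apply pow_le_pow_right₀ (by norm_num)
          exact Nat.one_le_iff_ne_zero.mpr (Nat.factorial_ne_zero N)
  have hex : ∃ m : ℕ, t < (2:ℝ)^((m+1)!) := by
    obtain ⟨m, hm⟩ := exists_nat_gt t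
    refine ⟨m, lt_of_lt_of_le hm ?_⟩
    have s1 : m ≤ (m+1)! := le_trans (Nat.le_succ m) (m+1).self_le_factorial
    have s2 : (m+1)! < 2^((m+1)!) := Nat.lt_two_pow_self
    have : (m:ℕ) < 2^((m+1)!) := lt_of_le_of_lt s1 s2
    exact_mod_cast this.le
  set k := Nat.find hex with hk
  have hk1 : t < (2:ℝ)^((k+1)!) := Nat.find_spec hex
  have hkpos : 1 ≤ k := by
    by_contra h
    push_neg at h
    have hk0 : k = 0 := by omega
    rw [hk0] at hk1
    norm_num [Nat.factorial] at hk1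
    linarith
  have hfloor : (2:ℝ)^(k !) ≤ t := by
    have h := Nat.find_min hex (show k - 1 < k by omega)
    push_neg at h
    rwa [show k - 1 + 1 = k by omega] at h
  clear_value k
  have hkN : N ≤ k := by
    by_contra h
    push_neg at h
    have hfle : (k+1)! ≤ N ! := Nat.factorial_le h
    have : (2:ℝ)^((k+1)!) ≤ 2^(N !) := by
      apply pow_le_pow_right₀ (by norm_num) hfle
    linarith
  obtain ⟨P, hP⟩ := LiouvilleNumber.partialSum_eq_rat (show 0 < 2 by norm_num) k
  refine ⟨(P:ℤ), (2:ℤ)^(k !), one_le_pow₀ (by norm_num), ?_, ?_⟩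
  · push_cast
    exact hfloor
  · have hrem := LiouvilleNumber.remainder_lt' k (by norm_num : (1:ℝ) < 2)
    have hrpos := LiouvilleNumber.remainder_pos (by norm_num : (1:ℝ) < 2) k
    have hsum := LiouvilleNumber.partialSum_add_remainder (by norm_num : (1:ℝ) < 2) k
    have hPr : LiouvilleNumber.partialSum 2 k = (P:ℝ) / (2:ℝ)^(k !) := by
      exact_mod_cast hP
    have hq2 : (((2:ℤ)^(k !) : ℤ):ℝ) = (2:ℝ)^(k !) := by push_cast; ring
    have hdiff : ((2:ℝ)^(k !)) * liouvilleNumber 2 - (P:ℝ)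
        = (2:ℝ)^(k !) * LiouvilleNumber.remainder 2 k := by
      rw [← hsum, hPr]
      field_simp
      ring
    have hPP : (((P:ℤ)):ℝ) = (P:ℝ) := by push_cast; ring
    rw [hq2, hPP, hdiff]
    have hrem2 : LiouvilleNumber.remainder 2 k ≤ 2 / (2:ℝ)^((k+1)!) := by
      have heq : ((1:ℝ) - 1/2)⁻¹ * (1/(2:ℝ)^((k+1)!)) = 2 / (2:ℝ)^((k+1)!) := by
        norm_num
        ring
      rw [heq] at hrem
      exact hrem.le
    have hpos1 : (0:ℝ) < (2:ℝ)^(k !) := by positivity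
    have habs : |(2:ℝ)^(k !) * LiouvilleNumber.remainder 2 k|
        = (2:ℝ)^(k !) * LiouvilleNumber.remainder 2 k := abs_of_pos (by positivity)
    rw [habs]
    have main : (2:ℝ)^(k !) * ((2:ℝ)^(k !) * LiouvilleNumber.remainder 2 k)
        ≤ (2:ℝ)^(k !) * ((2:ℝ)^(k !) * (2 / (2:ℝ)^((k+1)!))) := by
      apply mul_le_mul_of_nonneg_left _ hpos1.le
      exact mul_le_mul_of_nonneg_left hrem2 hpos1.le
    refine le_trans main ?_
    -- now : 2^{k!} * (2^{k!} * (2/2^{(k+1)!})) ≤ t^(1-γ)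
    have e1 : (2:ℝ)^(k !) * ((2:ℝ)^(k !) * (2 / (2:ℝ)^((k+1)!)))
        = (2:ℝ) ^ ((2*(k ! : ℝ) + 1) - ((k+1)! : ℝ)) := by
      rw [Real.rpow_sub (by norm_num : (0:ℝ) < 2)]
      rw [Real.rpow_add (by norm_num : (0:ℝ) < 2), Real.rpow_one]
      rw [show (2*(k ! : ℝ)) = (k ! : ℝ) + (k ! : ℝ) by ring]
      rw [Real.rpow_add (by norm_num : (0:ℝ) < 2)]
      rw [Real.rpow_natCast, Real.rpow_natCast]
      ring
    have e2 : ((2:ℝ)^((k+1)!) : ℝ) ^ ((1:ℝ)-γ) = (2:ℝ) ^ ((((k+1)! : ℕ):ℝ) * (1-γ)) := by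
      rw [← Real.rpow_natCast 2 ((k+1)!), ← Real.rpow_mul (by norm_num : (0:ℝ) ≤ 2)]
    have hexp : (2*(k ! : ℝ) + 1) - ((k+1)! : ℝ) ≤ (((k+1)! : ℕ):ℝ) * (1-γ) := by
      -- ⇔ 2 k! + 1 ≤ (2-γ)(k+1)!
      have hf1 : (1:ℝ) ≤ (k ! : ℝ) := by exact_mod_cast Nat.one_le_iff_ne_zero.mpr (Nat.factorial_ne_zero k)
      have hfact : ((k+1)! : ℝ) = ((k:ℝ)+1) * (k ! : ℝ) := by
        rw [Nat.factorial_succ]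
        push_cast
        ring
      have hge : (2-γ) * ((k:ℝ)+1) ≥ 3 := by
        have : (N:ℝ) + 1 ≤ (k:ℝ)+1 := by
          have : (N:ℝ) ≤ (k:ℝ) := by exact_mod_cast hkN
          linarith
        nlinarith
      have h5 : (2-γ) * (((k+1)!):ℝ) ≥ 3 * (k ! :ℝ) := by
        rw [hfact]
        nlinarith
      linarith
    have e3 : (2:ℝ) ^ ((2*(k ! : ℝ) + 1) - ((k+1)! : ℝ)) ≤ (2:ℝ) ^ ((((k+1)! : ℕ):ℝ) * (1-γ)) :=
      Real.rpow_le_rpow_of_exponent_le (by norm_num) hexp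
    have e4 : ((2:ℝ)^((k+1)!)) ^ ((1:ℝ)-γ) ≤ t ^ (1-γ) := by
      apply Real.rpow_le_rpow_of_nonpos (by linarith) hk1.le (by linarith)
    calc (2:ℝ)^(k !) * ((2:ℝ)^(k !) * (2 / (2:ℝ)^((k+1)!)))
        = (2:ℝ) ^ ((2*(k ! : ℝ) + 1) - ((k+1)! : ℝ)) := e1
      _ ≤ (2:ℝ) ^ ((((k+1)! : ℕ):ℝ) * (1-γ)) := e3
      _ = ((2:ℝ)^((k+1)!)) ^ ((1:ℝ)-γ) := e2.symm
      _ ≤ t ^ (1-γ) := e4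

lemma liouville_irrational : Irrational (liouvilleNumber 2) := by
  have h := liouville_liouvilleNumber (le_refl 2)
  have := h.irrational
  norm_num at this ⊢
  exact this

lemma sqrt2_exp : weakUniformExp (Real.sqrt 2) = ((1:ℝ) : EReal) :=
  exp_eq_of _ 1 (fun _ hγ => scond_of_le_one _ hγ.le)
    (fun γ h => scond_le_one_of_bad _ (1/5) (by norm_num) sqrt2_bound γ h)

lemma liouville_exp : weakUniformExp (liouvilleNumber 2) = ((2:ℝ) : EReal) :=
  exp_eq_of _ 2 (fun γ hγ => liouville_scond γ hγ)
    (fun γ h => scond_le_two _ liouville_irrational γ h)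

lemma middle_exp (r : ℝ) (hr1 : 1 < r) (hr2 : r < 2) :
    ∃ θ : ℝ, Irrational θ ∧ weakUniformExp θ = ((r:ℝ) : EReal) := by
  set b : ℝ := 1/(2-r) with hbdef
  have h2r : (0:ℝ) < 2 - r := by linarith
  have hb : 1 < b := by
    rw [hbdef, lt_div_iff₀ h2r]
    linarith
  have hbinv : 1/b = 2 - r := by
    rw [hbdef]
    field_simp
  have hveq : 2 - 1/b = r := by rw [hbinv]; ring
  set c : CFData := cfOfB b hb.le with hc
  have hgl : ∀ n, ((c.q (n+1):ℝ))^b ≤ (c.q (n+2):ℝ) := fun n => (cfOfB_growth b hb.le n).1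
  have hgu : ∀ n, (c.q (n+2):ℝ) ≤ 3*((c.q (n+1):ℝ))^b := fun n => (cfOfB_growth b hb.le n).2
  refine ⟨c.θ, c.theta_irrational, ?_⟩
  apply exp_eq_of
  · intro γ hγ
    rcases le_or_gt γ 1 with h1 | h1
    · exact scond_of_le_one _ h1
    · exact c.cf_scond b γ hb hgl h1 (by rw [hveq]; exact hγ)
  · intro γ h
    by_contra hcon
    push_neg at hcon
    exact c.cf_not_scond b γ hb hgl hgu (by rw [hveq]; exact hcon) h

/-- The spectrum of the weak uniform Diophantine exponent over irrational numbers
is exactly the segment `[1, 2]`: for every real `v ∈ [1, 2]` there is an irrational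
`θ` with `ω̂̂(θ) = v`, and conversely. -/
theorem weakUniformExp_spectrum :
    {v : EReal | ∃ θ : ℝ, Irrational θ ∧ weakUniformExp θ = v} =
      Set.Icc (1 : EReal) 2 := by
  ext v
  simp only [Set.mem_setOf_eq, Set.mem_Icc]
  constructor
  · rintro ⟨θ, hirr, rfl⟩
    constructor
    · have h := one_le_exp θ
      have e : ((1:ℝ) : EReal) = (1 : EReal) := by norm_cast
      rwa [e] at h
    · have h := exp_le_of θ 2 (fun γ hs => scond_le_two θ hirr γ hs)
      have e : ((2:ℝ) : EReal) = (2 : EReal) := by norm_cast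
      rwa [e] at h
  · rintro ⟨h1, h2⟩
    have h2top : ((2:ℝ):EReal) = (2:EReal) := by norm_cast
    have h1bot : ((1:ℝ):EReal) = (1:EReal) := by norm_cast
    have hvt : v ≠ ⊤ := by
      intro hv
      rw [hv, top_le_iff] at h2
      exact EReal.coe_ne_top 2 (by rw [h2top]; exact h2)
    have hvb : v ≠ ⊥ := by
      intro hv
      rw [hv, le_bot_iff] at h1
      exact EReal.coe_ne_bot 1 (by rw [h1bot]; exact h1)
    obtain ⟨r, rfl⟩ : ∃ r : ℝ, v = ((r:ℝ) : EReal) := ⟨v.toReal, (EReal.coe_toReal hvt hvb).symm⟩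
    have hr1 : (1:ℝ) ≤ r := by
      have e : ((1:ℝ) : EReal) = (1 : EReal) := by norm_cast
      rw [← e] at h1
      exact_mod_cast h1
    have hr2 : r ≤ 2 := by
      have e : ((2:ℝ) : EReal) = (2 : EReal) := by norm_cast
      rw [← e] at h2
      exact_mod_cast h2
    rcases eq_or_lt_of_le hr1 with hre1 | hrg1
    · exact ⟨Real.sqrt 2, irrational_sqrt_two, by rw [← hre1]; exact sqrt2_exp⟩
    · rcases eq_or_lt_of_le hr2 with hre2 | hrl2
      · exact ⟨liouvilleNumber 2, liouville_irrational, by rw [hre2]; exact liouville_exp⟩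
      · obtain ⟨θ, hirr, hexp⟩ := middle_exp r hrg1 hrl2
        exact ⟨θ, hirr, hexp⟩
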